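/- Let (Ω, F, μ) be a probability space, T : Ω → Ω an invertible measure-preserving transformation (not necessarily ergodic), and f : Ω → ℤ measurable; set X_n = f ∘ T^n for n ∈ ℤ. If for μ-almost every ω the integer 0 has infinitely many ancestors in the record graph of (X_n(ω)) (i.e., R^n(0) < R^{n+1}(0) for all n ≥ 0), then for μ-almost every ω the record graph of (X_n(ω)) is connected. -/

import Mathlib

open MeasureTheory

/-- The record map of an integer-valued sequence `x : ℤ → ℤ`: `recordMap x i` is the least
`n > i` such that `∑_{l=i}^{n-1} x l ≥ 0` if such an `n` exists, and `i` otherwise. -/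
noncomputable def recordMap (x : ℤ → ℤ) (i : ℤ) : ℤ := by
  classical
  exact if ∃ n, i < n ∧ 0 ≤ ∑ l ∈ Finset.Ico i n, x l then
    sInf {n : ℤ | i < n ∧ 0 ≤ ∑ l ∈ Finset.Ico i n, x l}
  else i

/-- The `n`-th iterate (`n : ℤ`) of an invertible transformation `T`. -/
def zIter {Ω : Type*} [MeasurableSpace Ω] (T : Ω ≃ᵐ Ω) (n : ℤ) (ω : Ω) : Ω :=
  if 0 ≤ n then (⇑T)^[n.toNat] ω else (⇑T.symm)^[(-n).toNat] ω

/-- The stationary sequence `X_n(ω) = f (T^n ω)`, `n : ℤ`, realized at `ω`. -/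
def statSeq {Ω : Type*} [MeasurableSpace Ω] (T : Ω ≃ᵐ Ω) (f : Ω → ℤ) (ω : Ω) : ℤ → ℤ :=
  fun n => f (zIter T n ω)

/-!
If `i` has infinitely many ancestors, every partial sum `X_l + ⋯ + X_{N-1}` with `i ≤ l ≤ N`
ending at a point `N` of the orbit of `i` is nonnegative. From any `j ∈ [i, N]` the record map
therefore never jumps past `N`, so `N` also lies on the orbit of `j`; since the orbit of `i`
is unbounded, the orbits of `i` and of any `j ≥ i` meet.

By stationarity `T^k` conjugates the record map of `X(ω)` to that of `X(T^k ω)` by the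
translation by `k`, so almost surely every integer, not just `0`, has infinitely many ancestors.
-/

open Finset

theorem Int.sum_Ico_consecutive {M : Type*} [AddCommMonoid M] (x : ℤ → M) {a b c : ℤ}
    (hab : a ≤ b) (hbc : b ≤ c) :
    ∑ l ∈ Ico a b, x l + ∑ l ∈ Ico b c, x l = ∑ l ∈ Ico a c, x l := by
  rw [← sum_union (Ico_disjoint_Ico_consecutive a b c), Ico_union_Ico_eq_Ico hab hbc]

theorem Int.sum_Ico_add_right {M : Type*} [AddCommMonoid M] (x : ℤ → M) (k a b : ℤ) :
    ∑ l ∈ Ico a b, x (l + k) = ∑ l ∈ Ico (a + k) (b + k), x l := by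
  rw [← map_add_right_Ico, sum_map]
  rfl

section RecordMap

variable {x : ℤ → ℤ} {i j l m : ℤ}

theorem recordMap_spec (h : ∃ n, i < n ∧ 0 ≤ ∑ l ∈ Ico i n, x l) :
    i < recordMap x i ∧ 0 ≤ ∑ l ∈ Ico i (recordMap x i), x l := by
  rw [recordMap, if_pos h]
  exact Int.csInf_mem h ⟨i, fun _ hn => hn.1.le⟩

theorem recordMap_le (him : i < m) (hm : 0 ≤ ∑ l ∈ Ico i m, x l) : recordMap x i ≤ m := by
  rw [recordMap, if_pos ⟨m, him, hm⟩]
  exact csInf_le ⟨i, fun _ hn => hn.1.le⟩ ⟨him, hm⟩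

theorem lt_recordMap_iff : i < recordMap x i ↔ ∃ n, i < n ∧ 0 ≤ ∑ l ∈ Ico i n, x l := by
  refine ⟨fun h => ?_, fun h => (recordMap_spec h).1⟩
  by_contra hne
  rw [recordMap, if_neg hne] at h
  exact h.false

theorem self_le_recordMap : i ≤ recordMap x i := by
  by_cases h : ∃ n, i < n ∧ 0 ≤ ∑ l ∈ Ico i n, x l
  · exact (recordMap_spec h).1.le
  · rw [recordMap, if_neg h]

theorem sum_Ico_recordMap_nonneg (h : i < recordMap x i) :
    0 ≤ ∑ l ∈ Ico i (recordMap x i), x l :=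
  (recordMap_spec (lt_recordMap_iff.1 h)).2

theorem sum_Ico_neg_of_lt_recordMap (him : i < m) (hm : m < recordMap x i) :
    ∑ l ∈ Ico i m, x l < 0 :=
  lt_of_not_ge fun hsum => (recordMap_le him hsum).not_gt hm

theorem sum_Ico_recordMap_nonneg_of_le (h : i < recordMap x i) (hil : i ≤ l)
    (hl : l ≤ recordMap x i) : 0 ≤ ∑ l' ∈ Ico l (recordMap x i), x l' := by
  have hsplit := Int.sum_Ico_consecutive x hil hl
  have hnonneg := sum_Ico_recordMap_nonneg h
  rcases hil.eq_or_lt with rfl | hil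
  · exact hnonneg
  rcases hl.eq_or_lt with rfl | hl
  · simp
  linarith [sum_Ico_neg_of_lt_recordMap hil hl]

theorem recordMap_comp_add_right (x : ℤ → ℤ) (k i : ℤ) :
    recordMap (fun n => x (n + k)) i = recordMap x (i + k) - k := by
  set y : ℤ → ℤ := fun n => x (n + k)
  have hsum (n : ℤ) : ∑ l ∈ Ico i n, y l = ∑ l ∈ Ico (i + k) (n + k), x l :=
    Int.sum_Ico_add_right x k i n
  have hx := self_le_recordMap (x := x) (i := i + k)
  have hy := self_le_recordMap (x := y) (i := i)
  by_cases h : i + k < recordMap x (i + k)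
  · have hx_sum := sum_Ico_recordMap_nonneg h
    have hy_lt : i < recordMap y i :=
      lt_recordMap_iff.2 ⟨_, (by omega : i < recordMap x (i + k) - k),
        by rwa [hsum, sub_add_cancel]⟩
    have hle₁ : recordMap x (i + k) ≤ recordMap y i + k :=
      recordMap_le (by omega) (by rw [← hsum]; exact sum_Ico_recordMap_nonneg hy_lt)
    have hle₂ : recordMap y i ≤ recordMap x (i + k) - k :=
      recordMap_le (by omega) (by rwa [hsum, sub_add_cancel])
    omega
  · have hy_eq : ¬ i < recordMap y i := fun hy_lt =>
      h (lt_recordMap_iff.2 ⟨_, (by omega : i + k < recordMap y i + k),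
        by rw [← hsum]; exact sum_Ico_recordMap_nonneg hy_lt⟩)
    omega

theorem iterate_recordMap_comp_add_right (x : ℤ → ℤ) (k : ℤ) (n : ℕ) (i : ℤ) :
    (recordMap fun l => x (l + k))^[n] i = (recordMap x)^[n] (i + k) - k := by
  induction n generalizing i with
  | zero => simp
  | succ n ih =>
    rw [Function.iterate_succ_apply', Function.iterate_succ_apply', ih,
      recordMap_comp_add_right, sub_add_cancel]

section InfiniteAncestors

variable (hanc : ∀ n : ℕ, (recordMap x)^[n] i < (recordMap x)^[n + 1] i)
include hanc

theorem le_iterate_recordMap (m : ℕ) : i + m ≤ (recordMap x)^[m] i := by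
  induction m with
  | zero => simp
  | succ m ih => have := hanc m; push_cast; omega

theorem sum_Ico_iterate_recordMap_nonneg (m : ℕ) (hil : i ≤ l) (hl : l ≤ (recordMap x)^[m] i) :
    0 ≤ ∑ l' ∈ Ico l ((recordMap x)^[m] i), x l' := by
  induction m generalizing l with
  | zero => simp [le_antisymm hl hil]
  | succ m ih =>
    set N := (recordMap x)^[m] i
    have hN : N < recordMap x N := by simpa only [Function.iterate_succ_apply'] using hanc m
    rw [Function.iterate_succ_apply'] at hl ⊢
    rcases le_total l N with hlN | hNl
    · linarith [Int.sum_Ico_consecutive x hlN hN.le, ih hil hlN, sum_Ico_recordMap_nonneg hN]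
    · exact sum_Ico_recordMap_nonneg_of_le hN hNl hl

end InfiniteAncestors

theorem exists_iterate_recordMap_eq {N : ℤ} (hjN : j ≤ N)
    (hsum : ∀ l, j ≤ l → l ≤ N → 0 ≤ ∑ l' ∈ Ico l N, x l') :
    ∃ n : ℕ, (recordMap x)^[n] j = N := by
  obtain ⟨d, hd⟩ : ∃ d : ℕ, N - j ≤ d := ⟨(N - j).toNat, Int.self_le_toNat _⟩
  induction d generalizing j with
  | zero => exact ⟨0, by simp only [Function.iterate_zero, id]; omega⟩
  | succ d ih =>
    rcases hjN.eq_or_lt with rfl | hjN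
    · exact ⟨0, rfl⟩
    have hlt : j < recordMap x j := lt_recordMap_iff.2 ⟨N, hjN, hsum j le_rfl hjN.le⟩
    have hle : recordMap x j ≤ N := recordMap_le hjN (hsum j le_rfl hjN.le)
    obtain ⟨n, hn⟩ := ih hle (fun l hl => hsum l (hlt.le.trans hl)) (by omega)
    exact ⟨n + 1, by rwa [Function.iterate_succ_apply]⟩

theorem exists_iterate_recordMap_eq_iterate
    (hanc : ∀ n : ℕ, (recordMap x)^[n] i < (recordMap x)^[n + 1] i) (hij : i ≤ j) :
    ∃ m n : ℕ, (recordMap x)^[m] i = (recordMap x)^[n] j := by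
  set m := (j - i).toNat
  have hjN : j ≤ (recordMap x)^[m] i := by
    have := le_iterate_recordMap hanc m; omega
  obtain ⟨n, hn⟩ := exists_iterate_recordMap_eq hjN fun l hjl hl =>
    sum_Ico_iterate_recordMap_nonneg hanc m (hij.trans hjl) hl
  exact ⟨m, n, hn.symm⟩

end RecordMap

section Stationary

variable {Ω : Type*} [MeasurableSpace Ω] (T : Ω ≃ᵐ Ω)

theorem zIter_eq_zpow (n : ℤ) (ω : Ω) : zIter T n ω = (T.toEquiv ^ n : Equiv.Perm Ω) ω := by
  rcases le_or_gt 0 n with hn | hn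
  · obtain ⟨k, rfl⟩ := Int.eq_ofNat_of_zero_le hn
    rw [zIter, if_pos hn, Int.toNat_natCast, zpow_natCast, ← Equiv.Perm.iterate_eq_pow]
    rfl
  · obtain ⟨k, rfl⟩ := Int.exists_eq_neg_ofNat hn.le
    rw [zIter, if_neg hn.not_ge, neg_neg, Int.toNat_natCast, zpow_neg, zpow_natCast, ← inv_pow,
      ← Equiv.Perm.iterate_eq_pow]
    rfl

theorem zIter_zIter (a b : ℤ) (ω : Ω) : zIter T a (zIter T b ω) = zIter T (a + b) ω := by
  rw [zIter_eq_zpow, zIter_eq_zpow, zIter_eq_zpow, ← Equiv.Perm.mul_apply, ← zpow_add]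

theorem measurePreserving_zIter {μ : Measure Ω} (hT : MeasurePreserving T μ μ) (k : ℤ) :
    MeasurePreserving (zIter T k) μ μ := by
  unfold zIter
  split_ifs
  · exact hT.iterate k.toNat
  · exact (hT.symm T).iterate (-k).toNat

theorem statSeq_zIter (f : Ω → ℤ) (k : ℤ) (ω : Ω) :
    statSeq T f (zIter T k ω) = fun n => statSeq T f ω (n + k) := by
  funext n
  simp only [statSeq, zIter_zIter]

theorem ae_forall_iterate_recordMap_lt {μ : Measure Ω} (hT : MeasurePreserving T μ μ)
    (f : Ω → ℤ) (hanc : ∀ᵐ ω ∂μ, ∀ n : ℕ,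
      (recordMap (statSeq T f ω))^[n] 0 < (recordMap (statSeq T f ω))^[n + 1] 0) :
    ∀ᵐ ω ∂μ, ∀ k : ℤ, ∀ n : ℕ,
      (recordMap (statSeq T f ω))^[n] k < (recordMap (statSeq T f ω))^[n + 1] k := by
  rw [ae_all_iff]
  intro k
  filter_upwards [(measurePreserving_zIter T hT k).quasiMeasurePreserving.ae hanc] with ω hω n
  have := hω n
  simp only [statSeq_zIter, iterate_recordMap_comp_add_right, zero_add] at this
  omega

end Stationary

theorem record_graph_connected_of_infinite_ancestors_general {Ω : Type*} [MeasurableSpace Ω]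
    (μ : Measure Ω) (T : Ω ≃ᵐ Ω)
    (hT : MeasurePreserving (⇑T) μ μ) (f : Ω → ℤ)
    (hanc : ∀ᵐ ω ∂μ, ∀ n : ℕ,
      (recordMap (statSeq T f ω))^[n] 0 < (recordMap (statSeq T f ω))^[n + 1] 0) :
    ∀ᵐ ω ∂μ, ∀ i j : ℤ, ∃ m n : ℕ,
      (recordMap (statSeq T f ω))^[m] i = (recordMap (statSeq T f ω))^[n] j := by
  filter_upwards [ae_forall_iterate_recordMap_lt T hT f hanc] with ω hω i j
  rcases le_total i j with hij | hji
  · exact exists_iterate_recordMap_eq_iterate (hω i) hij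
  · obtain ⟨m, n, h⟩ := exists_iterate_recordMap_eq_iterate (hω j) hji
    exact ⟨n, m, h.symm⟩

/-- For a stationary integer-valued sequence `X_n = f ∘ T^n` (with `T` invertible measure
preserving, not necessarily ergodic), if almost surely `0` has infinitely many ancestors in
the record graph of `(X_n(ω))` (i.e. `R^n(0) < R^{n+1}(0)` for all `n ≥ 0`), then almost
surely the record graph of `(X_n(ω))` is connected. -/
theorem record_graph_connected_of_infinite_ancestors {Ω : Type*} [MeasurableSpace Ω]
    (μ : Measure Ω) [IsProbabilityMeasure μ] (T : Ω ≃ᵐ Ω)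
    (hT : MeasurePreserving (⇑T) μ μ) (f : Ω → ℤ) (hf : Measurable f)
    (hanc : ∀ᵐ ω ∂μ, ∀ n : ℕ,
      (recordMap (statSeq T f ω))^[n] 0 < (recordMap (statSeq T f ω))^[n + 1] 0) :
    ∀ᵐ ω ∂μ, ∀ i j : ℤ, ∃ m n : ℕ,
      (recordMap (statSeq T f ω))^[m] i = (recordMap (statSeq T f ω))^[n] j :=
  record_graph_connected_of_infinite_ancestors_general μ T hT f hanc
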